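/- For all integers k ≥ 2 and 0 ≤ ℓ ≤ k − 2, the integral ∫_{ℂ²} |z_1|^{2k} |z_2|^{2ℓ} (|z_1|⁴ + 2|z_1|² + |z_2|² + 1) exp(−(½|z_1|⁴ + |z_1|²|z_2|² + |z_1|²)) dλ(z_1, z_2) is finite; that is, the monomial z_1^k z_2^ℓ belongs to the weighted Bergman space A²(ℂ², h, e^{−ψ}) of the Kähler metric with potential χ(z_1,z_2) = ¼|z_1|⁴ + |z_1|²|z_2|² + |z_1|² + |z_2|² and weight ψ(z_1,z_2) = ½|z_1|⁴ + |z_1|²|z_2|² + |z_1|². -/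

import Mathlib

/-!
Integrate first in `z₂`. For `s = |z₁|² > 0` the Gamma integral
`∫ |w|^{2m} e^{-s|w|²} dλ(w) = π m! / s^{m+1}` turns the fibre integral into
`π s^{k-ℓ-2} (ℓ! s (s+1)² + (ℓ+1)!) e^{-(s²/2 + s)}`: the negative powers of `s` produced
by the fibre are absorbed by `|z₁|^{2k}` exactly when `ℓ + 2 ≤ k`. What is left is a polynomial
in `|z₁|²` times `e^{-|z₁|²}`, which is integrable on `ℂ`.
-/

open Complex MeasureTheory Finset

noncomputable section

/-- The density `e^{−ψ} det(h) = (|z₁|⁴ + 2|z₁|² + |z₂|² + 1)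
exp(−(½|z₁|⁴ + |z₁|²|z₂|² + |z₁|²))` of the weighted Bergman space on `ℂ²`
with Kähler potential `¼|z₁|⁴ + |z₁|²|z₂|² + |z₁|² + |z₂|²` and weight
`½|z₁|⁴ + |z₁|²|z₂|² + |z₁|²`. -/
def bergW (z : Fin 2 → ℂ) : ℝ :=
  ((Complex.normSq (z 0)) ^ 2 + 2 * Complex.normSq (z 0) +
      Complex.normSq (z 1) + 1) *
    Real.exp (-((1 / 2) * (Complex.normSq (z 0)) ^ 2 +
      Complex.normSq (z 0) * Complex.normSq (z 1) + Complex.normSq (z 0)))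

open scoped ENNReal Nat
open Polynomial

theorem integral_normSq_pow_mul_exp_neg_mul (m : ℕ) {b : ℝ} (hb : 0 < b) :
    ∫ z : ℂ, normSq z ^ m * Real.exp (-(b * normSq z)) = Real.pi * m ! / b ^ (m + 1) := by
  have h := Complex.integral_rpow_mul_exp_neg_mul_rpow (p := 2) (q := (2 * m : ℕ)) one_le_two
    (by linarith [(2 * m).cast_nonneg (α := ℝ)]) hb
  have hnorm : ∀ z : ℂ, ‖z‖ ^ ((2 * m : ℕ) : ℝ) * Real.exp (-b * ‖z‖ ^ (2 : ℝ)) =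
      normSq z ^ m * Real.exp (-(b * normSq z)) := by
    intro z
    rw [Real.rpow_natCast, Real.rpow_two, normSq_eq_norm_sq, pow_mul, neg_mul]
  simp only [hnorm] at h
  rw [h, show (((2 * m : ℕ) : ℝ) + 2) / 2 = (m : ℝ) + 1 by push_cast; ring,
    Real.Gamma_nat_eq_factorial,
    show -(((2 * m : ℕ) : ℝ) + 2) / 2 = -((m + 1 : ℕ) : ℝ) by push_cast; ring,
    Real.rpow_neg hb.le, Real.rpow_natCast]
  field_simp

-- A non-integrable function has Bochner integral `0`, so the nonzero value above forces
-- integrability.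
theorem integrable_normSq_pow_mul_exp_neg_mul (m : ℕ) {b : ℝ} (hb : 0 < b) :
    Integrable fun z : ℂ => normSq z ^ m * Real.exp (-(b * normSq z)) :=
  Integrable.of_integral_ne_zero <| by
    rw [integral_normSq_pow_mul_exp_neg_mul m hb]; positivity

theorem Polynomial.integrable_eval_normSq_mul_exp_neg_mul (p : ℝ[X]) {b : ℝ} (hb : 0 < b) :
    Integrable fun z : ℂ => p.eval (normSq z) * Real.exp (-(b * normSq z)) := by
  simp only [eval_eq_sum_range, Finset.sum_mul, mul_assoc]
  exact integrable_finsetSum _ fun i _ =>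
    (integrable_normSq_pow_mul_exp_neg_mul i hb).const_mul _

theorem lintegral_piFinTwo_le {α : Type*} [MeasureSpace α] [SigmaFinite (volume : Measure α)]
    (f : (Fin 2 → α) → ℝ≥0∞) :
    ∫⁻ z, f z ≤ ∫⁻ x, ∫⁻ y, f ![x, y] := by
  rw [← ((volume_preserving_piFinTwo fun _ => α).symm).lintegral_comp_emb
    (MeasurableEquiv.measurableEmbedding _)]
  exact lintegral_prod_le _

/-- `bergW z = bergDensity |z₁|² |z₂|²`. -/
def bergDensity (s t : ℝ) : ℝ :=
  (s ^ 2 + 2 * s + t + 1) * Real.exp (-((1 / 2) * s ^ 2 + s * t + s))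

def fiberPoly (k ℓ : ℕ) : ℝ[X] :=
  C Real.pi * X ^ (k - (ℓ + 2)) * (C (ℓ ! : ℝ) * X * (X + 1) ^ 2 + C ((ℓ + 1)! : ℝ))

theorem lintegral_pow_mul_bergDensity {k ℓ : ℕ} (hℓ : ℓ + 2 ≤ k) {s : ℝ} (hs : 0 < s) :
    ∫⁻ w : ℂ, ENNReal.ofReal (s ^ k * normSq w ^ ℓ * bergDensity s (normSq w)) =
      ENNReal.ofReal ((fiberPoly k ℓ).eval s * Real.exp (-((1 / 2) * s ^ 2 + s))) := by
  set g : ℕ → ℂ → ℝ := fun m w => normSq w ^ m * Real.exp (-(s * normSq w)) with hg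
  have hgi : ∀ m, Integrable (g m) := fun m => integrable_normSq_pow_mul_exp_neg_mul m hs
  set E := Real.exp (-((1 / 2) * s ^ 2 + s))
  have hsplit : ∀ w, s ^ k * normSq w ^ ℓ * bergDensity s (normSq w) =
      s ^ k * (s + 1) ^ 2 * E * g ℓ w + s ^ k * E * g (ℓ + 1) w := by
    intro w
    simp only [bergDensity, hg, E, neg_add, Real.exp_add, pow_succ]
    ring
  have hint : Integrable fun w => s ^ k * (s + 1) ^ 2 * E * g ℓ w + s ^ k * E * g (ℓ + 1) w :=
    ((hgi ℓ).const_mul _).add ((hgi _).const_mul _)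
  simp_rw [hsplit]
  rw [← ofReal_integral_eq_lintegral_ofReal hint
      (Filter.Eventually.of_forall fun w => by have := normSq_nonneg w; positivity),
    integral_add ((hgi ℓ).const_mul _) ((hgi _).const_mul _), integral_const_mul,
    integral_const_mul, integral_normSq_pow_mul_exp_neg_mul ℓ hs,
    integral_normSq_pow_mul_exp_neg_mul (ℓ + 1) hs]
  obtain ⟨a, rfl⟩ : ∃ a, k = ℓ + 2 + a := ⟨k - (ℓ + 2), by omega⟩
  simp only [fiberPoly, Nat.add_sub_cancel_left, Nat.factorial_succ, eval_mul, eval_add,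
    eval_pow, eval_C, eval_X, eval_one]
  congr 1
  push_cast
  field_simp
  ring

theorem lintegral_pow_mul_bergDensity_le {k ℓ : ℕ} (hℓ : ℓ + 2 ≤ k) {s : ℝ} (hs : 0 ≤ s) :
    ∫⁻ w : ℂ, ENNReal.ofReal (s ^ k * normSq w ^ ℓ * bergDensity s (normSq w)) ≤
      ENNReal.ofReal ((fiberPoly k ℓ).eval s * Real.exp (-(1 * s))) := by
  rcases hs.eq_or_lt with rfl | hs
  · simp [zero_pow (by omega : k ≠ 0)]
  rw [lintegral_pow_mul_bergDensity hℓ hs]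
  refine ENNReal.ofReal_le_ofReal (mul_le_mul_of_nonneg_left
    (Real.exp_le_exp.2 (by nlinarith)) ?_)
  simp only [fiberPoly, eval_mul, eval_add, eval_pow, eval_C, eval_X, eval_one]
  positivity

theorem stmt15 (k ℓ : ℕ) (hℓ : ℓ + 2 ≤ k) :
    (∫⁻ z : Fin 2 → ℂ,
      ENNReal.ofReal
        ((Complex.normSq (z 0)) ^ k * (Complex.normSq (z 1)) ^ ℓ * bergW z)
      ∂volume) < ⊤ :=
  calc _ ≤ ∫⁻ z₁ : ℂ, ∫⁻ w : ℂ,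
          ENNReal.ofReal (normSq z₁ ^ k * normSq w ^ ℓ * bergDensity (normSq z₁) (normSq w)) :=
        lintegral_piFinTwo_le _
    _ ≤ ∫⁻ z₁ : ℂ,
          ENNReal.ofReal ((fiberPoly k ℓ).eval (normSq z₁) * Real.exp (-(1 * normSq z₁))) :=
        lintegral_mono fun z₁ => lintegral_pow_mul_bergDensity_le hℓ (normSq_nonneg z₁)
    _ < ⊤ := ((fiberPoly k ℓ).integrable_eval_normSq_mul_exp_neg_mul one_pos).lintegral_lt_top
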